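/- Let p be an odd prime. The holomorph Hol((C_p × C_p) ⋊ C_2) contains a normal subgroup isomorphic to the elementary abelian group C_p × C_p × C_p × C_p of order p⁴, which is contained in every Sylow p-subgroup of Hol((C_p × C_p) ⋊ C_2). -/

import Mathlib

/-!
Let `G = (C_p × C_p) ⋊ C_2` and `V = C_p × C_p ≤ G`, and let `ρ` be the right regular
representation. The subgroup `F = λ(V) ρ(V)` of `Hol G` is normal: conjugation by `Hol G` maps
left translations to left translations and right translations (their centralizer) to right
translations, preserving orders, and for odd `p` the elements of `G` of order dividing `p` are
exactly those of `V`. The map `V × V → F` is injective because the involution of `G` inverts `V`,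
so that `V` meets the centre of `G` trivially. Thus `F ≅ C_p⁴` is a normal `p`-subgroup, and lies
in every Sylow `p`-subgroup.
-/

open Equiv

/-- The left regular representation of a group `N` in `Equiv.Perm N`. -/
def leftReg (N : Type*) [Group N] : N →* Equiv.Perm N :=
  MulAction.toPermHom N N

/-- The holomorph of `N`: the normalizer of the image of the left regular
representation inside the symmetric group on `N`. -/
def Hol (N : Type*) [Group N] : Subgroup (Equiv.Perm N) :=
  Subgroup.normalizer (MonoidHom.range (leftReg N))

/-- A subgroup of `Equiv.Perm N` is semiregular if every non-identity element
has no fixed point on `N`. -/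
def IsSemiregular {N : Type*} [Group N] (H : Subgroup (Equiv.Perm N)) : Prop :=
  ∀ g ∈ H, g ≠ 1 → ∀ x : N, g x ≠ x

/-- A subgroup of `Equiv.Perm N` is regular if its natural action on `N` is
simply transitive. -/
def IsRegularSubgroup {N : Type*} [Group N] (G : Subgroup (Equiv.Perm N)) : Prop :=
  ∀ x y : N, ∃! g : G, (g : Equiv.Perm N) x = y

/-- The cyclic group of order `n` (written multiplicatively). -/
abbrev Cyc (n : ℕ) := Multiplicative (ZMod n)

/-- The group `C_p × C_p` (written multiplicatively). -/
abbrev Vp (p : ℕ) := Multiplicative (ZMod p × ZMod p)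

/-- The action of `C_2` on `C_p × C_p` in which the generator acts by inversion. -/
def actC2 (p : ℕ) : Multiplicative (ZMod 2) →* MulAut (Vp p) where
  toFun c := if Multiplicative.toAdd c = 0 then 1 else MulEquiv.inv (Vp p)
  map_one' := by simp
  map_mul' a b := by
    have h : ∀ x : ZMod 2, x = 0 ∨ x = 1 := by decide
    have hmul : Multiplicative.toAdd (a * b) = Multiplicative.toAdd a + Multiplicative.toAdd b := rfl
    have h11 : (1 : ZMod 2) + 1 = 0 := by decide
    have hinv : (1 : MulAut (Vp p)) = MulEquiv.inv (Vp p) * MulEquiv.inv (Vp p) := by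
      refine MulEquiv.ext fun x => ?_
      show x = (x⁻¹)⁻¹
      simp
    rcases h (Multiplicative.toAdd a) with ha | ha <;> rcases h (Multiplicative.toAdd b) with hb | hb <;>
      simp [hmul, ha, hb, h11, hinv]

/-- The semidirect product `(C_p × C_p) ⋊ C_2`, where the generator of `C_2`
acts by inversion. -/
abbrev GD (p : ℕ) := SemidirectProduct (Vp p) (Multiplicative (ZMod 2)) (actC2 p)

open SemidirectProduct

section Holomorph

variable {N : Type*} [Group N]

def rightReg (N : Type*) [Group N] : N →* Perm N where
  toFun n := Equiv.mulRight n⁻¹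
  map_one' := by ext; simp
  map_mul' a b := by ext; simp [mul_assoc]

@[simp]
lemma leftReg_apply (n x : N) : leftReg N n x = n * x := rfl

@[simp]
lemma rightReg_apply (n x : N) : rightReg N n x = x * n⁻¹ := rfl

lemma leftReg_injective : Function.Injective (leftReg N) := fun a b h => by
  simpa using congr($h 1)

lemma rightReg_injective : Function.Injective (rightReg N) := fun a b h => by
  simpa using congr($h 1)

lemma commute_leftReg_rightReg (a b : N) : Commute (leftReg N a) (rightReg N b) :=
  Perm.ext fun x => by simp [mul_assoc]

lemma leftReg_mem_Hol (n : N) : leftReg N n ∈ Hol N :=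
  Subgroup.le_normalizer ⟨n, rfl⟩

lemma rightReg_mem_Hol (n : N) : rightReg N n ∈ Hol N := by
  refine Subgroup.centralizer_le_normalizer _ (Subgroup.mem_centralizer_iff.mpr ?_)
  rintro _ ⟨m, rfl⟩
  exact commute_leftReg_rightReg m n

lemma exists_eq_rightReg_of_commute_leftReg {π : Perm N}
    (hπ : ∀ n, Commute π (leftReg N n)) : ∃ c, π = rightReg N c :=
  ⟨(π 1)⁻¹, Perm.ext fun x => by
    rw [rightReg_apply, inv_inv]
    simpa using congr($((hπ x).eq) 1)⟩

lemma exists_conj_leftReg_eq {g : Perm N} (hg : g ∈ Hol N) (n : N) :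
    ∃ m, g * leftReg N n * g⁻¹ = leftReg N m := by
  obtain ⟨m, hm⟩ := (Subgroup.mem_normalizer_iff.mp hg (leftReg N n)).mp ⟨n, rfl⟩
  exact ⟨m, hm.symm⟩

lemma exists_conj_rightReg_eq {g : Perm N} (hg : g ∈ Hol N) (n : N) :
    ∃ m, g * rightReg N n * g⁻¹ = rightReg N m := by
  refine exists_eq_rightReg_of_commute_leftReg fun k => ?_
  obtain ⟨m, hm⟩ := exists_conj_leftReg_eq (inv_mem hg) k
  rw [inv_inv] at hm
  have hk : leftReg N k = g * leftReg N m * g⁻¹ := by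
    rw [← hm]; group
  simpa [hk] using (commute_leftReg_rightReg m n).symm.map (MulAut.conj g)

end Holomorph

section LeftRightReg

variable {N H : Type*} [Group N] [Group H] (ι : H →* N)

def leftRightReg : H × H →* Perm N :=
  MonoidHom.noncommCoprod ((leftReg N).comp ι) ((rightReg N).comp ι)
    fun a b => commute_leftReg_rightReg (ι a) (ι b)

lemma leftRightReg_apply (a b : H) :
    leftRightReg ι (a, b) = leftReg N (ι a) * rightReg N (ι b) := rfl

lemma leftRightReg_mem_Hol (x : H × H) : leftRightReg ι x ∈ Hol N :=
  mul_mem (leftReg_mem_Hol _) (rightReg_mem_Hol _)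

/-- Evaluating `λ(ι a) ρ(ι b) = 1` at `1` gives `ι a = ι b`, and then at `x` shows that `ι a` is
central. -/
lemma leftRightReg_injective (hι : ∀ h, ι h ∈ Subgroup.center N → h = 1) :
    Function.Injective (leftRightReg ι) := by
  rw [injective_iff_map_eq_one]
  rintro ⟨a, b⟩ hab
  rw [leftRightReg_apply] at hab
  have hba : ι b = ι a := by
    have h1 : ι a * (ι b)⁻¹ = 1 := by simpa using congr($hab 1)
    exact (mul_inv_eq_one.mp h1).symm
  have hcentral : ι a ∈ Subgroup.center N := Subgroup.mem_center_iff.mpr fun x => by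
    have hx : ι a * (x * (ι a)⁻¹) = x := by simpa [hba] using congr($hab x)
    rw [← mul_assoc, mul_inv_eq_iff_eq_mul] at hx
    exact hx.symm
  have ha := hι a hcentral
  have hb : b = 1 := hι b (by rwa [hba])
  simp [ha, hb]

/-- Conjugation by `g ∈ Hol N` maps left (right) translations to left (right) translations
and preserves orders, and `ι H` is the set of solutions of `n ^ e = 1`. -/
lemma exists_conj_leftRightReg_eq {e : ℕ} (hexp : ∀ h, ι h ^ e = 1)
    (hrange : ∀ n : N, n ^ e = 1 → n ∈ ι.range) {g : Perm N} (hg : g ∈ Hol N) (x : H × H) :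
    ∃ y, g * leftRightReg ι x * g⁻¹ = leftRightReg ι y := by
  obtain ⟨a, b⟩ := x
  obtain ⟨m, hm⟩ := exists_conj_leftReg_eq hg (ι a)
  obtain ⟨c, hc⟩ := exists_conj_rightReg_eq hg (ι b)
  obtain ⟨a', rfl⟩ := hrange m <| leftReg_injective <| by
    rw [map_pow, ← hm, conj_pow, ← map_pow, hexp, map_one, mul_one, mul_inv_cancel]
  obtain ⟨b', rfl⟩ := hrange c <| rightReg_injective <| by
    rw [map_pow, ← hc, conj_pow, ← map_pow, hexp, map_one, mul_one, mul_inv_cancel]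
  refine ⟨(a', b'), ?_⟩
  rw [leftRightReg_apply, leftRightReg_apply, ← hm, ← hc]
  group

def leftRightRegHol : H × H →* Hol N :=
  (leftRightReg ι).codRestrict (Hol N) (leftRightReg_mem_Hol ι)

lemma leftRightRegHol_injective (hι : ∀ h, ι h ∈ Subgroup.center N → h = 1) :
    Function.Injective (leftRightRegHol ι) :=
  fun _ _ hxy => leftRightReg_injective ι hι congr(Subtype.val $hxy)

lemma normal_range_leftRightRegHol {e : ℕ} (hexp : ∀ h, ι h ^ e = 1)
    (hrange : ∀ n : N, n ^ e = 1 → n ∈ ι.range) : (leftRightRegHol ι).range.Normal where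
  conj_mem := by
    rintro _ ⟨x, rfl⟩ g
    obtain ⟨y, hy⟩ := exists_conj_leftRightReg_eq ι hexp hrange g.2 x
    exact ⟨y, Subtype.ext hy.symm⟩

end LeftRightReg

lemma SemidirectProduct.mem_range_inl_of_pow_eq_one_of_odd {N : Type*} [Group N]
    {φ : Multiplicative (ZMod 2) →* MulAut N} {k : ℕ} (hk : Odd k)
    {g : N ⋊[φ] Multiplicative (ZMod 2)} (hg : g ^ k = 1) : g ∈ (inl : N →* _).range := by
  rw [range_inl_eq_ker_rightHom, MonoidHom.mem_ker]
  have hsq : ∀ c : Multiplicative (ZMod 2), c ^ 2 = 1 := by decide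
  exact (pow_eq_one_iff_of_coprime (Nat.coprime_two_left.mpr hk)).mp
    ⟨hsq _, by rw [← map_pow, hg, map_one]⟩

section Dihedral

variable {p : ℕ}

lemma Vp.pow_eq_one (v : Vp p) : v ^ p = 1 := by
  ext <;> simp

lemma Vp.eq_one_of_mul_self (hodd : Odd p) {v : Vp p} (hv : v * v = 1) : v = 1 :=
  (pow_eq_one_iff_of_coprime (Nat.coprime_two_left.mpr hodd)).mp
    ⟨by rwa [sq], Vp.pow_eq_one v⟩

lemma actC2_ofAdd_one (v : Vp p) : actC2 p (Multiplicative.ofAdd 1) v = v⁻¹ := rfl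

/-- The generator of `C_2` inverts `inl v`. -/
lemma GD.eq_one_of_inl_mem_center (hodd : Odd p) {v : Vp p}
    (hv : (inl v : GD p) ∈ Subgroup.center (GD p)) : v = 1 := by
  have hinv : (inl v⁻¹ : GD p) = inl v := by
    rw [← actC2_ofAdd_one, inl_aut, Subgroup.mem_center_iff.mp hv, map_inv,
      mul_inv_cancel_right]
  exact Vp.eq_one_of_mul_self hodd (inv_eq_iff_mul_eq_one.mp (inl_injective hinv))

end Dihedral

/-- `Hol((C_p × C_p) ⋊ C_2)` contains a normal subgroup isomorphic to
`C_p × C_p × C_p × C_p`, of order `p⁴`, contained in every Sylow `p`-subgroup. -/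
theorem statement10 (p : ℕ) (hp : p.Prime) (hodd : Odd p) :
    ∃ F : Subgroup (Hol (GD p)), F.Normal ∧
      Nonempty (F ≃* Multiplicative (ZMod p × ZMod p × ZMod p × ZMod p)) ∧
      Nat.card F = p ^ 4 ∧
      ∀ P : Sylow p (Hol (GD p)), F ≤ (P : Subgroup (Hol (GD p))) := by
  have : Fact p.Prime := ⟨hp⟩
  let ι : Vp p →* GD p := inl
  have hnormal : (leftRightRegHol ι).range.Normal :=
    normal_range_leftRightRegHol ι (fun v => by rw [← map_pow, Vp.pow_eq_one, map_one])
      (fun _ hg => mem_range_inl_of_pow_eq_one_of_odd hodd hg)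
  have hinj := leftRightRegHol_injective ι fun _ => GD.eq_one_of_inl_mem_center hodd
  let e : (leftRightRegHol ι).range ≃* Multiplicative (ZMod p × ZMod p × ZMod p × ZMod p) :=
    (MonoidHom.ofInjective hinj).symm.trans
      ((MulEquiv.prodMultiplicative _ _).symm.trans AddEquiv.prodAssoc.toMultiplicative)
  have hcard : Nat.card (leftRightRegHol ι).range = p ^ 4 := by
    rw [Nat.card_congr e.toEquiv]
    simp only [Nat.card_congr Multiplicative.toAdd, Nat.card_prod, Nat.card_zmod]
    ring
  exact ⟨_, hnormal, ⟨e⟩, hcard, (IsPGroup.of_card hcard).le_sylow_of_normal⟩
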